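/- Under the MNL choice model with exit option γ, the pairwise policy matching patient i to provider v_i (for patients with v_i ≥ 0) achieves match rate (1/N)·Σ_{i: v_i ≥ 0} exp(θ_{i,v_i})/(exp(θ_{i,v_i}) + exp(γ)), and its expected match quality is at least (1/N)·Σ_i exp(θ_{i,v_i})/(exp(θ_{i,v_i})+exp(γ)) times the optimal expected match quality. -/

import Mathlib

/-!
The patients accept independently, so the outcome `c : Fin N → Bool` carries product Bernoulli
weights and, by linearity of expectation, an additive statistic `∑ i ∈ {i | c i}, f i` has mean
`∑ i, p i * f i`. This gives the match rate and turns the expected quality into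
`(1/N) ∑ i, p i * q i`. The acceptance probabilities `p` and the qualities `q` are similarly
ordered (on assigned patients `p i` is a sigmoid of `q i`, on unassigned ones both vanish), so
Chebyshev's sum inequality bounds this below by the product of the averages.
-/

open Finset

/-- `θ`-quality of the provider assigned to patient `i` (0 if unassigned). -/
def qualAt {N M : ℕ} (θ : Fin N → Fin M → ℝ) (v : Fin N → Option (Fin M)) (i : Fin N) : ℝ :=
  match v i with
  | some j => θ i j
  | none => 0

/-- MNL acceptance probability of patient `i` for their (singleton) offer: a patient
offered provider `j` selects it with probability `exp(θ_{i,j})/(exp(θ_{i,j})+exp γ)`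
and abstains otherwise; patients with no offer never match. -/
noncomputable def mnlProb {N M : ℕ} (γ : ℝ) (θ : Fin N → Fin M → ℝ) (v : Fin N → Option (Fin M))
    (i : Fin N) : ℝ :=
  match v i with
  | some j => Real.exp (θ i j) / (Real.exp (θ i j) + Real.exp γ)
  | none => 0

theorem Real.exp_div_exp_add_exp (a b : ℝ) :
    Real.exp a / (Real.exp a + Real.exp b) = Real.sigmoid (a - b) := by
  rw [Real.sigmoid_def, neg_sub, Real.exp_sub]
  field_simp

theorem Fintype.sum_prod_mul_apply {ι κ R : Type*} [Fintype ι] [DecidableEq ι] [Fintype κ]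
    [CommSemiring R] (F : ι → κ → R) (h : κ → R) (i : ι) :
    ∑ c : ι → κ, (∏ j, F j (c j)) * h (c i) = (∑ b, F i b * h b) * ∏ j ∈ {i}ᶜ, ∑ b, F j b := by
  set G := Function.update F i fun b => F i b * h b
  have hG : ∀ j ∈ ({i}ᶜ : Finset ι), G j = F j := fun j hj =>
    Function.update_of_ne (by simpa using hj) _ _
  have hGi : G i = fun b => F i b * h b := Function.update_self ..
  have hsummand : ∀ c : ι → κ, (∏ j, F j (c j)) * h (c i) = ∏ j, G j (c j) := by
    intro c
    rw [Fintype.prod_eq_mul_prod_compl i, Fintype.prod_eq_mul_prod_compl i (fun j => G j (c j)),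
      Finset.prod_congr rfl fun j hj => congrFun (hG j hj) (c j), hGi]
    ring
  simp_rw [hsummand, ← Fintype.prod_sum]
  rw [Fintype.prod_eq_mul_prod_compl i, hGi, Finset.prod_congr rfl fun j hj => by rw [hG j hj]]

theorem Fintype.sum_prod_bernoulli_mul_sum_ite {ι R : Type*} [Fintype ι] [DecidableEq ι]
    [CommRing R] (p f : ι → R) :
    ∑ c : ι → Bool, (∏ i, if c i then p i else 1 - p i) * (∑ i, if c i then f i else 0)
      = ∑ i, p i * f i := by
  simp_rw [Finset.mul_sum]
  rw [Finset.sum_comm]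
  refine Finset.sum_congr rfl fun i _ => ?_
  refine (Fintype.sum_prod_mul_apply (fun j (b : Bool) => if b then p j else 1 - p j)
    (fun (b : Bool) => if b then f i else 0) i).trans ?_
  simp

theorem Monovary.inv_card_mul_sum_mul_inv_card_mul_sum_le {ι : Type*} [Fintype ι]
    {f g : ι → ℝ} (hfg : Monovary f g) :
    ((1 / (Fintype.card ι : ℝ)) * ∑ i, f i) * ((1 / (Fintype.card ι : ℝ)) * ∑ i, g i)
      ≤ (1 / (Fintype.card ι : ℝ)) * ∑ i, f i * g i := by
  set n : ℝ := (Fintype.card ι : ℝ)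
  calc (1 / n * ∑ i, f i) * (1 / n * ∑ i, g i) = (1 / n) * (1 / n) * ((∑ i, f i) * ∑ i, g i) := by
        ring
    _ ≤ (1 / n) * (1 / n) * (n * ∑ i, f i * g i) :=
        mul_le_mul_of_nonneg_left hfg.sum_mul_sum_le_card_mul_sum (by positivity)
    _ = (1 / n) * ∑ i, f i * g i := by
        rcases eq_or_ne n 0 with hn | hn
        · simp [hn]
        · field_simp

section MNL

variable {N M : ℕ} (γ : ℝ) {θ : Fin N → Fin M → ℝ} (v : Fin N → Option (Fin M))

theorem mnlProb_nonneg (i : Fin N) : 0 ≤ mnlProb γ θ v i := by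
  unfold mnlProb
  split <;> positivity

theorem qualAt_nonneg (hθ : ∀ i j, 0 ≤ θ i j) (i : Fin N) :
    0 ≤ qualAt θ v i := by
  unfold qualAt
  split
  · exact hθ _ _
  · rfl

theorem monovary_mnlProb_qualAt (hθ : ∀ i j, 0 ≤ θ i j) :
    Monovary (mnlProb γ θ v) (qualAt θ v) := by
  intro i j hlt
  rcases hvi : v i with _ | a
  · rw [show mnlProb γ θ v i = 0 by simp only [mnlProb, hvi]]
    exact mnlProb_nonneg γ v j
  rcases hvj : v j with _ | b
  · have hqj : qualAt θ v j = 0 := by simp only [qualAt, hvj]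
    exact absurd hlt (hqj ▸ (qualAt_nonneg v hθ i).not_gt)
  · simp only [qualAt, hvi, hvj] at hlt
    simp only [mnlProb, hvi, hvj, Real.exp_div_exp_add_exp]
    exact Real.sigmoid_le (by linarith)

theorem sum_prod_mnlProb_mul_card_accepted_div :
    ∑ c : Fin N → Bool,
        (∏ i, if c i then mnlProb γ θ v i else 1 - mnlProb γ θ v i) *
          (((Finset.univ.filter fun i => c i = true ∧ (v i).isSome).card : ℝ) / N)
      = (1 / (N : ℝ)) * ∑ i, mnlProb γ θ v i := by
  have hcard : ∀ c : Fin N → Bool,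
      ((Finset.univ.filter fun i => c i = true ∧ (v i).isSome).card : ℝ)
        = ∑ i, if c i then (if (v i).isSome then 1 else 0) else 0 := by
    intro c
    simp_rw [Finset.natCast_card_filter, ite_and]
  have hunassigned : ∀ i, mnlProb γ θ v i * (if (v i).isSome then 1 else 0) = mnlProb γ θ v i := by
    intro i
    rcases hvi : v i with _ | a <;> simp [mnlProb, hvi]
  rw [one_div]
  simp_rw [hcard, ← mul_div_assoc, div_eq_inv_mul, ← Finset.mul_sum,
    Fintype.sum_prod_bernoulli_mul_sum_ite, hunassigned]

theorem sum_prod_mnlProb_mul_average_accepted_qualAt :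
    ∑ c : Fin N → Bool,
        (∏ i, if c i then mnlProb γ θ v i else 1 - mnlProb γ θ v i) *
          ((1 / (N : ℝ)) * ∑ i, if c i = true then qualAt θ v i else 0)
      = (1 / (N : ℝ)) * ∑ i, mnlProb γ θ v i * qualAt θ v i := by
  simp_rw [mul_left_comm _ (1 / (N : ℝ)), ← Finset.mul_sum, Fintype.sum_prod_bernoulli_mul_sum_ite]

end MNL

theorem mnl_pairwise_match_rate_and_quality_general (N M : ℕ) (γ : ℝ)
    (θ : Fin N → Fin M → ℝ) (hθ : ∀ i j, θ i j ∈ Set.Icc (0 : ℝ) 1)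
    (v : Fin N → Option (Fin M)) :
    ((∑ c : Fin N → Bool,
        (∏ i, if c i then mnlProb γ θ v i else 1 - mnlProb γ θ v i) *
          (((Finset.univ.filter fun i => c i = true ∧ (v i).isSome).card : ℝ) / N))
      = (1 / (N : ℝ)) * ∑ i, mnlProb γ θ v i) ∧
    ((1 / (N : ℝ)) * ∑ i, mnlProb γ θ v i) * ((1 / (N : ℝ)) * ∑ i, qualAt θ v i)
      ≤ ∑ c : Fin N → Bool,
          (∏ i, if c i then mnlProb γ θ v i else 1 - mnlProb γ θ v i) *
            ((1 / (N : ℝ)) * ∑ i, if c i = true then qualAt θ v i else 0) := by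
  refine ⟨sum_prod_mnlProb_mul_card_accepted_div γ v, ?_⟩
  rw [sum_prod_mnlProb_mul_average_accepted_qualAt]
  have hcheb :=
    (monovary_mnlProb_qualAt γ v fun i j => (hθ i j).1).inv_card_mul_sum_mul_inv_card_mul_sum_le
  rwa [Fintype.card_fin] at hcheb

/-- Under the MNL choice model with exit option `γ`, the pairwise policy given by a
maximum-weight bipartite matching `v` (patients make independent accept/abstain
decisions on their singleton offers, so the response order is irrelevant) achieves

(a) match rate `(1/N)·∑_{i : v i ≥ 0} exp(θ_{i,v_i})/(exp(θ_{i,v_i})+exp γ)`, and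

(b) expected match quality at least `(1/N)·∑_i exp(θ_{i,v_i})/(exp(θ_{i,v_i})+exp γ)`
times `(1/N)` times the maximum bipartite matching weight of `θ`, which upper-bounds
the optimal expected match quality. -/
theorem mnl_pairwise_match_rate_and_quality (N M : ℕ) (hN : 0 < N) (γ : ℝ)
    (θ : Fin N → Fin M → ℝ) (hθ : ∀ i j, θ i j ∈ Set.Icc (0 : ℝ) 1)
    (v : Fin N → Option (Fin M))
    (hinj : ∀ i i' j, v i = some j → v i' = some j → i = i')
    (hopt : ∀ w : Fin N → Option (Fin M),
      (∀ i i' j, w i = some j → w i' = some j → i = i') →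
      ∑ i, qualAt θ w i ≤ ∑ i, qualAt θ v i) :
    ((∑ c : Fin N → Bool,
        (∏ i, if c i then mnlProb γ θ v i else 1 - mnlProb γ θ v i) *
          (((Finset.univ.filter fun i => c i = true ∧ (v i).isSome).card : ℝ) / N))
      = (1 / (N : ℝ)) * ∑ i, mnlProb γ θ v i) ∧
    ((1 / (N : ℝ)) * ∑ i, mnlProb γ θ v i) * ((1 / (N : ℝ)) * ∑ i, qualAt θ v i)
      ≤ ∑ c : Fin N → Bool,
          (∏ i, if c i then mnlProb γ θ v i else 1 - mnlProb γ θ v i) *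
            ((1 / (N : ℝ)) * ∑ i, if c i = true then qualAt θ v i else 0) :=
  mnl_pairwise_match_rate_and_quality_general N M γ θ hθ v
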